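/- Let M ∈ ℝ^{m×n} have singular value decomposition M = UΣVᵀ with singular values σ₁ ≥ σ₂ ≥ ... ≥ 0, and let M_r = U_r Σ_r V_rᵀ be the truncation to the top r singular values. Then for every matrix Z with rank(Z) ≤ r, ‖M − Z‖_F² ≥ Σ_{i>r} σ_i² = ‖M − M_r‖_F². -/

import Mathlib

/-!
Write `M = U Σ Vᵀ`. Orthonormal factors do not change the Frobenius norm, so `‖M - M_r‖²` is
the tail `∑_{i ≥ r} σᵢ²`. For `Z` of rank at most `r`, let the columns of `W` be an orthonormal
basis of `ker Z`, of dimension `d ≥ n - r`. Then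
`‖M - Z‖² ≥ ‖(M - Z) W‖² = ‖Σ Vᵀ W‖² = ∑ σᵢ² cᵢ`, where `cᵢ` is the squared norm of the `i`-th
row of `Vᵀ W`. These weights satisfy `0 ≤ cᵢ ≤ 1` and `∑ cᵢ ≥ d + k - n ≥ k - r`, and for
decreasing `σᵢ` such weights can do no better than putting mass one on the last `k - r` indices.
-/

open Matrix

def frobSq {m n : ℕ} (A : Matrix (Fin m) (Fin n) ℝ) : ℝ :=
  ∑ i, ∑ j, (A i j) ^ 2

theorem mul_transpose_sub_mul_transpose_eq_of_transpose_mul_eq_one {R : Type*} [CommRing R]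
    {m n d : Type*} [Fintype n] [Fintype d] [DecidableEq n] [DecidableEq d] (X : Matrix m n R)
    {W : Matrix n d R} (hW : Wᵀ * W = 1) :
    X * Xᵀ - (X * W) * (X * W)ᵀ = (X * (1 - W * Wᵀ)) * (X * (1 - W * Wᵀ))ᵀ := by
  have hP : W * Wᵀ * (W * Wᵀ) = W * Wᵀ := by
    rw [Matrix.mul_assoc, ← Matrix.mul_assoc Wᵀ, hW, Matrix.one_mul]
  have hQ : (1 - W * Wᵀ) * (1 - W * Wᵀ)ᵀ = 1 - W * Wᵀ := by
    rw [transpose_sub, transpose_one, transpose_mul, transpose_transpose, Matrix.sub_mul,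
      Matrix.mul_sub, Matrix.mul_sub, Matrix.one_mul, Matrix.mul_one, Matrix.one_mul, hP]
    abel
  calc X * Xᵀ - (X * W) * (X * W)ᵀ = X * ((1 - W * Wᵀ) * (1 - W * Wᵀ)ᵀ) * Xᵀ := by
        rw [hQ, Matrix.mul_sub, Matrix.sub_mul, Matrix.mul_one, transpose_mul]
        simp only [Matrix.mul_assoc]
    _ = (X * (1 - W * Wᵀ)) * (X * (1 - W * Wᵀ))ᵀ := by
        rw [transpose_mul X]; simp only [Matrix.mul_assoc]

theorem mul_transpose_self_apply_self {R : Type*} [CommSemiring R] {m n : Type*} [Fintype n]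
    (A : Matrix m n R) (i : m) : (A * Aᵀ) i i = ∑ j, A i j ^ 2 := by
  simp only [mul_apply, transpose_apply, sq]

section FrobSq

variable {m n k d : ℕ}

theorem frobSq_eq_trace (A : Matrix (Fin m) (Fin n) ℝ) : frobSq A = (A * Aᵀ).trace := by
  simp only [frobSq, trace, diag, mul_transpose_self_apply_self]

theorem frobSq_nonneg (A : Matrix (Fin m) (Fin n) ℝ) : 0 ≤ frobSq A := by
  unfold frobSq; positivity

theorem frobSq_transpose (A : Matrix (Fin m) (Fin n) ℝ) : frobSq Aᵀ = frobSq A :=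
  Finset.sum_comm

theorem frobSq_mul_of_transpose_mul_eq_one {U : Matrix (Fin m) (Fin k) ℝ} (hU : Uᵀ * U = 1)
    (B : Matrix (Fin k) (Fin n) ℝ) : frobSq (U * B) = frobSq B := by
  rw [← frobSq_transpose, frobSq_eq_trace, ← frobSq_transpose B, frobSq_eq_trace,
    transpose_transpose, transpose_transpose, transpose_mul, Matrix.mul_assoc,
    ← Matrix.mul_assoc Uᵀ, hU, Matrix.one_mul]

theorem frobSq_mul_transpose_of_transpose_mul_eq_one {V : Matrix (Fin n) (Fin k) ℝ}
    (hV : Vᵀ * V = 1) (B : Matrix (Fin m) (Fin k) ℝ) : frobSq (B * Vᵀ) = frobSq B := by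
  rw [← frobSq_transpose, transpose_mul, transpose_transpose,
    frobSq_mul_of_transpose_mul_eq_one hV, frobSq_transpose]

theorem frobSq_mul_le_of_transpose_mul_eq_one {W : Matrix (Fin n) (Fin d) ℝ}
    (hW : Wᵀ * W = 1) (A : Matrix (Fin m) (Fin n) ℝ) : frobSq (A * W) ≤ frobSq A := by
  have h := congrArg trace (mul_transpose_sub_mul_transpose_eq_of_transpose_mul_eq_one A hW)
  rw [trace_sub, ← frobSq_eq_trace, ← frobSq_eq_trace, ← frobSq_eq_trace] at h
  linarith [frobSq_nonneg (A * (1 - W * Wᵀ))]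

theorem frobSq_diagonal (a : Fin k → ℝ) : frobSq (diagonal a) = ∑ i, a i ^ 2 := by
  simp [frobSq, diagonal_apply, apply_ite (· ^ 2)]

theorem frobSq_diagonal_mul (a : Fin k → ℝ) (N : Matrix (Fin k) (Fin n) ℝ) :
    frobSq (diagonal a * N) = ∑ i, a i ^ 2 * ∑ j, N i j ^ 2 := by
  simp only [frobSq, diagonal_mul, mul_pow, Finset.mul_sum]

theorem sum_sq_transpose_mul_apply_le_one {V : Matrix (Fin n) (Fin k) ℝ}
    (hV : Vᵀ * V = 1) {W : Matrix (Fin n) (Fin d) ℝ} (hW : Wᵀ * W = 1) (i : Fin k) :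
    ∑ j, (Vᵀ * W) i j ^ 2 ≤ 1 := by
  have h := congrFun₂ (mul_transpose_sub_mul_transpose_eq_of_transpose_mul_eq_one Vᵀ hW) i i
  rw [transpose_transpose, hV, Matrix.sub_apply, one_apply_eq, mul_transpose_self_apply_self,
    mul_transpose_self_apply_self] at h
  rw [← sub_nonneg, h]
  positivity

theorem le_frobSq_transpose_mul {V : Matrix (Fin n) (Fin k) ℝ}
    (hV : Vᵀ * V = 1) {W : Matrix (Fin n) (Fin d) ℝ} (hW : Wᵀ * W = 1) :
    (d + k - n : ℝ) ≤ frobSq (Vᵀ * W) := by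
  -- `d - ‖Vᵀ W‖² = ‖(1 - V Vᵀ) W‖² ≤ ‖1 - V Vᵀ‖² = n - k`
  set Q : Matrix (Fin n) (Fin n) ℝ := 1 - V * Vᵀ
  have hQ : Q * Qᵀ = Q := by
    have h := mul_transpose_sub_mul_transpose_eq_of_transpose_mul_eq_one
      (1 : Matrix (Fin n) (Fin n) ℝ) hV
    simp only [Matrix.one_mul, transpose_one, Matrix.mul_one] at h
    exact h.symm
  have hWQ := congrArg trace (mul_transpose_sub_mul_transpose_eq_of_transpose_mul_eq_one Wᵀ hV)
  rw [transpose_transpose, hW, trace_sub, ← frobSq_eq_trace, ← frobSq_eq_trace, trace_one,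
    Fintype.card_fin, ← frobSq_transpose (Wᵀ * Q), transpose_mul, transpose_transpose] at hWQ
  have hQtr : frobSq Q = n - k := by
    rw [frobSq_eq_trace, hQ, trace_sub, trace_one, trace_mul_comm, hV, trace_one,
      Fintype.card_fin, Fintype.card_fin]
  have hQW : frobSq (Qᵀ * W) ≤ frobSq Q :=
    (frobSq_mul_le_of_transpose_mul_eq_one hW Qᵀ).trans_eq (frobSq_transpose Q)
  rw [← frobSq_transpose, transpose_mul, transpose_transpose]
  linarith

end FrobSq

theorem sum_le_sum_mul_of_le_of_le {ι : Type*} [Fintype ι] (s : Finset ι) {a c : ι → ℝ} {t : ℝ}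
    (ht : 0 ≤ t) (has : ∀ i ∈ s, a i ≤ t) (hat : ∀ i ∉ s, t ≤ a i) (hc0 : ∀ i, 0 ≤ c i)
    (hc1 : ∀ i, c i ≤ 1) (hcard : (s.card : ℝ) ≤ ∑ i, c i) :
    ∑ i ∈ s, a i ≤ ∑ i, a i * c i := by
  classical
  have hterm : ∀ i, (a i - t) * ((if i ∈ s then 1 else 0) - c i) ≤ 0 := by
    intro i
    by_cases hi : i ∈ s
    · simp only [hi, if_true]
      exact mul_nonpos_of_nonpos_of_nonneg (by linarith [has i hi]) (by linarith [hc1 i])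
    · simp only [hi, if_false, zero_sub]
      exact mul_nonpos_of_nonneg_of_nonpos (by linarith [hat i hi]) (by linarith [hc0 i])
  have hsplit : ∑ i ∈ s, a i - ∑ i, a i * c i
      = ∑ i, (a i - t) * ((if i ∈ s then 1 else 0) - c i) + t * (s.card - ∑ i, c i) := by
    simp only [mul_sub, sub_mul, mul_ite, mul_one, mul_zero, Finset.sum_sub_distrib,
      Finset.sum_ite_mem, Finset.univ_inter, ← Finset.mul_sum, Finset.sum_const, nsmul_eq_mul]
    ring
  have := Finset.sum_nonpos fun i (_ : i ∈ Finset.univ) => hterm i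
  have := mul_nonpos_of_nonneg_of_nonpos ht (sub_nonpos.2 hcard)
  linarith

theorem sum_filter_le_sum_mul_of_antitone {k : ℕ} (r : ℕ) {a c : Fin k → ℝ}
    (ha : Antitone a) (ha0 : ∀ i, 0 ≤ a i) (hc0 : ∀ i, 0 ≤ c i) (hc1 : ∀ i, c i ≤ 1)
    (hsum : (k - r : ℝ) ≤ ∑ i, c i) :
    ∑ i ∈ Finset.univ.filter (fun i : Fin k => r ≤ (i : ℕ)), a i ≤ ∑ i, a i * c i := by
  by_cases hr : r < k
  · have hs : Finset.univ.filter (fun i : Fin k => r ≤ (i : ℕ)) = Finset.Ici ⟨r, hr⟩ := by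
      ext i; simp [Fin.le_def]
    rw [hs]
    refine sum_le_sum_mul_of_le_of_le _ (ha0 ⟨r, hr⟩) (fun i hi => ha (Finset.mem_Ici.1 hi))
      (fun i hi => ha (le_of_lt (not_le.1 (Finset.mem_Ici.not.1 hi)))) hc0 hc1 ?_
    rw [Fin.card_Ici, Nat.cast_sub hr.le]
    exact hsum
  · have hs : Finset.univ.filter (fun i : Fin k => r ≤ (i : ℕ)) = ∅ := by
      ext i; simp only [Finset.mem_filter, Finset.mem_univ, true_and, Finset.notMem_empty,
        iff_false, not_le]; omega
    rw [hs, Finset.sum_empty]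
    exact Finset.sum_nonneg fun i _ => mul_nonneg (ha0 i) (hc0 i)

theorem sum_smul_vecMulVec_eq_mul_diagonal_mul_transpose {R : Type*} [CommSemiring R]
    {m n k : Type*} [Fintype k] [DecidableEq k] (U : Matrix m k R) (V : Matrix n k R)
    (a : k → R) :
    ∑ i, a i • vecMulVec (fun p => U p i) (fun q => V q i) = U * diagonal a * Vᵀ := by
  ext p q
  simp [Matrix.sum_apply, vecMulVec_apply, mul_apply, diagonal_apply, mul_comm, mul_left_comm]

theorem exists_orthonormal_cols_mul_eq_zero {ι : Type*} [Fintype ι] {n : ℕ}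
    (Z : Matrix ι (Fin n) ℝ) :
    ∃ (d : ℕ) (W : Matrix (Fin n) (Fin d) ℝ), Wᵀ * W = 1 ∧ Z * W = 0 ∧ Z.rank + d = n := by
  let K := LinearMap.ker (toEuclideanLin Z)
  let b := stdOrthonormalBasis ℝ K
  let v : Fin (Module.finrank ℝ K) → EuclideanSpace ℝ (Fin n) := fun j => b j
  have hv : Orthonormal ℝ v := b.orthonormal.comp_linearIsometry K.subtypeₗᵢ
  let W : Matrix (Fin n) (Fin (Module.finrank ℝ K)) ℝ := of fun q j => v j q
  refine ⟨Module.finrank ℝ K, W, ?_, ?_, ?_⟩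
  · have := gram_eq_conjTranspose_mul (EuclideanSpace.basisFun (Fin n) ℝ) v
    rw [gram_eq_one_iff_orthonormal.2 hv, conjTranspose_eq_transpose_of_trivial] at this
    simpa using this.symm
  · ext i j
    have hj : toEuclideanLin Z (v j) = 0 := (b j).2
    simpa [W, mul_apply, mulVec, dotProduct] using congrArg (fun x => x i) hj
  · rw [rank_eq_finrank_range_toLin Z (EuclideanSpace.basisFun ι ℝ).toBasis
      (EuclideanSpace.basisFun (Fin n) ℝ).toBasis, ← toEuclideanLin_eq_toLin_orthonormal,
      LinearMap.finrank_range_add_finrank_ker, finrank_euclideanSpace_fin]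

/-- Eckart–Young–Mirsky in the Frobenius norm: the truncation of the SVD to the top `r`
singular values is a best rank-`r` approximation, with error `Σ_{i > r} σ_i²`. -/
theorem eckart_young_mirsky {m n k : ℕ} (r : ℕ)
    (M : Matrix (Fin m) (Fin n) ℝ)
    (U : Matrix (Fin m) (Fin k) ℝ) (V : Matrix (Fin n) (Fin k) ℝ)
    (σ : Fin k → ℝ)
    (hU : Uᵀ * U = 1) (hV : Vᵀ * V = 1)
    (hσ_nonneg : ∀ i, 0 ≤ σ i)
    (hσ_mono : ∀ i j : Fin k, i ≤ j → σ j ≤ σ i)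
    (hM : M = ∑ i, σ i • Matrix.vecMulVec (fun p => U p i) (fun q => V q i))
    (Mr : Matrix (Fin m) (Fin n) ℝ)
    (hMr : Mr = ∑ i ∈ Finset.univ.filter (fun i : Fin k => (i : ℕ) < r),
      σ i • Matrix.vecMulVec (fun p => U p i) (fun q => V q i)) :
    frobSq (M - Mr) = ∑ i ∈ Finset.univ.filter (fun i : Fin k => r ≤ (i : ℕ)), σ i ^ 2 ∧
    ∀ Z : Matrix (Fin m) (Fin n) ℝ, Z.rank ≤ r →
      (∑ i ∈ Finset.univ.filter (fun i : Fin k => r ≤ (i : ℕ)), σ i ^ 2) ≤ frobSq (M - Z) := by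
  let τ : Fin k → ℝ := fun i => if r ≤ (i : ℕ) then σ i else 0
  have hM' : M = U * diagonal σ * Vᵀ :=
    hM.trans (sum_smul_vecMulVec_eq_mul_diagonal_mul_transpose ..)
  have hMr' : M - Mr = U * diagonal τ * Vᵀ := by
    rw [← sum_smul_vecMulVec_eq_mul_diagonal_mul_transpose, hM, hMr,
      ← Finset.sum_filter_add_sum_filter_not Finset.univ (fun i : Fin k => (i : ℕ) < r),
      add_sub_cancel_left, Finset.sum_filter]
    simp [τ, ite_smul]
  have htail :
      ∑ i ∈ Finset.univ.filter (fun i : Fin k => r ≤ (i : ℕ)), σ i ^ 2 = ∑ i, τ i ^ 2 := by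
    rw [Finset.sum_filter]
    simp [τ, apply_ite (· ^ 2)]
  refine ⟨?_, fun Z hZ => ?_⟩
  · rw [hMr', Matrix.mul_assoc, frobSq_mul_of_transpose_mul_eq_one hU,
      frobSq_mul_transpose_of_transpose_mul_eq_one hV, frobSq_diagonal, htail]
  obtain ⟨d, W, hW, hZW, hrank⟩ := exists_orthonormal_cols_mul_eq_zero Z
  have hd : (k - r : ℝ) ≤ frobSq (Vᵀ * W) := by
    have := le_frobSq_transpose_mul hV hW
    have : (n : ℝ) ≤ r + d := by exact_mod_cast hrank ▸ Nat.add_le_add_right hZ d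
    linarith
  calc ∑ i ∈ Finset.univ.filter (fun i : Fin k => r ≤ (i : ℕ)), σ i ^ 2
      ≤ ∑ i, σ i ^ 2 * ∑ j, (Vᵀ * W) i j ^ 2 :=
        sum_filter_le_sum_mul_of_antitone r
          (fun i j hij => pow_le_pow_left₀ (hσ_nonneg j) (hσ_mono i j hij) 2)
          (fun i => sq_nonneg _) (fun i => by positivity)
          (sum_sq_transpose_mul_apply_le_one hV hW) hd
    _ = frobSq (M * W) := by
        rw [hM', Matrix.mul_assoc, Matrix.mul_assoc, frobSq_mul_of_transpose_mul_eq_one hU,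
          frobSq_diagonal_mul]
    _ = frobSq ((M - Z) * W) := by rw [Matrix.sub_mul, hZW, sub_zero]
    _ ≤ frobSq (M - Z) := frobSq_mul_le_of_transpose_mul_eq_one hW _
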